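/- arXiv:2409.03742 — 2 statements merged into one kernel-verified Lean document; each statement's English description precedes it below -/
import Mathlib

section
/- Every full inclusion of simplicial sets f : Y → X is inner Kan (relatively Segal): for each n ≥ 2 the square comparing the Segal maps Y_n → Y_1×_{Y_0}⋯×_{Y_0}Y_1 and X_n → X_1×_{X_0}⋯×_{X_0}X_1 is a pullback of sets; consequently f is semi-ikeo. -/
open CategoryTheory Opposite

namespace Crapo

/-- A commuting square of sets
`A → B`, `A → C`, `B → D`, `C → D` is a pullback (element-wise formulation). -/
def IsPullbackSq {A B C D : Type*} (f : A → B) (g : A → C) (h : B → D) (k : C → D) : Prop :=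
  (∀ a, h (f a) = k (g a)) ∧ ∀ b c, h b = k c → ∃! a, f a = b ∧ g a = c

/-- `[n]` as an object of the simplex category. -/
abbrev Obj (n : ℕ) : SimplexCategory := SimplexCategory.mk n

/-- The set of `n`-simplices of a simplicial set. -/
abbrev Smp (X : SSet) (n : ℕ) : Type _ := X.obj (op (Obj n))

/-- A morphism of the simplex category is *active* if it preserves endpoints. -/
def IsActive {x y : SimplexCategory} (φ : x ⟶ y) : Prop :=
  φ.toOrderHom 0 = 0 ∧ φ.toOrderHom (Fin.last x.len) = Fin.last y.len

/-- A morphism of the simplex category is *inert* if it is distance preserving. -/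
def IsInert {x y : SimplexCategory} (φ : x ⟶ y) : Prop :=
  ∀ i : Fin x.len, (φ.toOrderHom i.succ : ℕ) = (φ.toOrderHom i.castSucc : ℕ) + 1

/-- The inert inclusion `[m] ↣ [n]` sending `0` to `a`. -/
def iota (m : ℕ) {n : ℕ} (a : ℕ) (h : a + m ≤ n) : Obj m ⟶ Obj n :=
  SimplexCategory.mkHom
    ⟨fun j => ⟨a + j.1, by have := j.2; omega⟩,
     fun p q hpq => by
      simp only [Fin.mk_le_mk]
      have : p.1 ≤ q.1 := hpq
      omega⟩

/-- The `i`-th principal edge `ρ_i : [1] ↣ [k]` (an inert map). -/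
def rho {k : ℕ} (i : Fin k) : Obj 1 ⟶ Obj k :=
  iota 1 i.1 (by have := i.2; omega)

/-- The unique active map `[1] → [n]`. -/
def longMap (n : ℕ) : Obj 1 ⟶ Obj n :=
  SimplexCategory.mkHom
    ⟨fun j => ⟨j.1 * n, by
        have h : j.1 ≤ 1 := Nat.lt_succ_iff.mp j.2
        have : j.1 * n ≤ 1 * n := Nat.mul_le_mul_right n h
        omega⟩,
     fun p q hpq => by
      simp only [Fin.mk_le_mk]
      exact Nat.mul_le_mul_right n hpq⟩

/-- The long edge of an `n`-simplex. -/
def longEdge (X : SSet) (n : ℕ) (σ : Smp X n) : Smp X 1 := X.map (longMap n).op σ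

/-- The vertex map `[0] → [n]` picking out vertex `i`. -/
def vmap {n : ℕ} (i : Fin (n + 1)) : Obj 0 ⟶ Obj n :=
  SimplexCategory.mkHom ⟨fun _ => i, fun _ _ _ => le_refl _⟩

lemma vmap_comp {n m : ℕ} (j : Fin (n + 1)) (φ : Obj n ⟶ Obj m) :
    vmap j ≫ φ = vmap (φ.toOrderHom j) := by
  apply SimplexCategory.Hom.ext
  apply OrderHom.ext
  funext z
  rfl

/-- The source vertex of an edge. -/
def edgeSrc (X : SSet) : Smp X 1 → Smp X 0 := X.map (vmap (0 : Fin 2)).op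

/-- The target vertex of an edge. -/
def edgeTgt (X : SSet) : Smp X 1 → Smp X 0 := X.map (vmap (1 : Fin 2)).op

/-- Nondegeneracy of a simplex: it is not in the image of any degeneracy map. -/
def Nondeg (X : SSet) : ∀ n : ℕ, Smp X n → Prop
  | 0 => fun _ => True
  | m + 1 => fun σ =>
      ∀ (i : Fin (m + 1)) (τ : Smp X m), X.map (SimplexCategory.σ i).op τ ≠ σ

/-- A (set-valued) decomposition space: pushouts in `Δ` of active maps along
inert maps are sent to pullbacks of sets. -/
def DecompositionSpace (X : SSet) : Prop :=
  ∀ {a b c d : SimplexCategory} (f : a ⟶ b) (g : a ⟶ c) (h : b ⟶ d) (i : c ⟶ d),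
    IsActive f → IsInert g → IsPushout f g h i →
    IsPullbackSq (X.map h.op) (X.map i.op) (X.map f.op) (X.map g.op)

/-- A simplicial set is complete if `s₀ : X₀ → X₁` is injective. -/
def CompleteS (X : SSet) : Prop :=
  Function.Injective (X.map (SimplexCategory.σ (0 : Fin 1)).op : Smp X 0 → Smp X 1)

/-- A simplicial map is *ikeo* if for every active `α : [k] → [n]`, with
inert-active factorisations `ρ_i ≫ α = β_i ≫ γ_i`, the square with horizontal
maps `(γ_1,…,γ_k)*` and vertical maps induced by `f` is a pullback of sets. -/
def Ikeo {Y X : SSet} (f : Y ⟶ X) : Prop :=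
  ∀ (k n : ℕ) (α : Obj k ⟶ Obj n), IsActive α →
    ∀ (ns : Fin k → ℕ) (γ : ∀ i, Obj (ns i) ⟶ Obj n) (β : ∀ i, Obj 1 ⟶ Obj (ns i)),
      (∀ i, IsInert (γ i)) → (∀ i, IsActive (β i)) →
      (∀ i, rho i ≫ α = β i ≫ γ i) →
      IsPullbackSq
        (fun σ i => Y.map (γ i).op σ)
        (f.app (op (Obj n)))
        (fun v i => f.app (op (Obj (ns i))) (v i))
        (fun σ i => X.map (γ i).op σ)

/-- A simplicial map is *semi-ikeo* if the ikeo condition holds for every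
*injective* active `α : [k] → [n]` with `k ≥ 1`. -/
def SemiIkeo {Y X : SSet} (f : Y ⟶ X) : Prop :=
  ∀ (k n : ℕ), 1 ≤ k → ∀ (α : Obj k ⟶ Obj n), IsActive α →
    Function.Injective α.toOrderHom →
    ∀ (ns : Fin k → ℕ) (γ : ∀ i, Obj (ns i) ⟶ Obj n) (β : ∀ i, Obj 1 ⟶ Obj (ns i)),
      (∀ i, IsInert (γ i)) → (∀ i, IsActive (β i)) →
      (∀ i, rho i ≫ α = β i ≫ γ i) →
      IsPullbackSq
        (fun σ i => Y.map (γ i).op σ)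
        (f.app (op (Obj n)))
        (fun v i => f.app (op (Obj (ns i))) (v i))
        (fun σ i => X.map (γ i).op σ)

/-- The iterated fibre product `X₁ ×_{X₀} ⋯ ×_{X₀} X₁` (`n` factors). -/
def SegalSet (X : SSet) (n : ℕ) : Type _ :=
  { v : Fin n → Smp X 1 //
    ∀ (i : Fin n) (h : i.1 + 1 < n), edgeTgt X (v i) = edgeSrc X (v ⟨i.1 + 1, h⟩) }

/-- The Segal map `X_n → X₁ ×_{X₀} ⋯ ×_{X₀} X₁`. -/
def segalMap (X : SSet) (n : ℕ) (σ : Smp X n) : SegalSet X n :=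
  ⟨fun i => X.map (rho i).op σ, by
    intro i h
    show X.map (vmap (1 : Fin 2)).op (X.map (rho i).op σ) =
      X.map (vmap (0 : Fin 2)).op (X.map (rho ⟨i.1 + 1, h⟩).op σ)
    rw [← FunctorToTypes.map_comp_apply, ← FunctorToTypes.map_comp_apply,
      ← op_comp, ← op_comp, vmap_comp, vmap_comp]
    have e : (SimplexCategory.Hom.toOrderHom (rho i)) 1 =
        (SimplexCategory.Hom.toOrderHom (rho ⟨i.1 + 1, h⟩)) 0 := by
      apply Fin.ext
      simp [rho, iota]
      rfl
    rw [e]⟩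

/-- The map on iterated fibre products induced by a simplicial map. -/
def segalInduced {Y X : SSet} (f : Y ⟶ X) (n : ℕ) : SegalSet Y n → SegalSet X n :=
  fun v => ⟨fun i => f.app (op (Obj 1)) (v.1 i), by
    intro i h
    show X.map (vmap (1 : Fin 2)).op (f.app (op (Obj 1)) (v.1 i)) =
      X.map (vmap (0 : Fin 2)).op (f.app (op (Obj 1)) (v.1 ⟨i.1 + 1, h⟩))
    rw [← FunctorToTypes.naturality, ← FunctorToTypes.naturality]
    exact congrArg (f.app (op (Obj 0))) (v.2 i h)⟩

/-- A simplicial map is *inner Kan* (relatively Segal) if for each `n ≥ 2` the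
square comparing the Segal maps is a pullback of sets. -/
def InnerKan {Y X : SSet} (f : Y ⟶ X) : Prop :=
  ∀ n : ℕ, 2 ≤ n →
    IsPullbackSq (segalMap Y n) (f.app (op (Obj n))) (segalInduced f n) (segalMap X n)

/-- A simplicial map is *fully faithful* if for each `n` the square formed by
the vertex maps is a pullback of sets. -/
def FullyFaithfulMap {Y X : SSet} (f : Y ⟶ X) : Prop :=
  ∀ n : ℕ,
    IsPullbackSq
      (fun (σ : Smp Y n) (i : Fin (n + 1)) => Y.map (vmap i).op σ)
      (f.app (op (Obj n)))
      (fun v i => f.app (op (Obj 0)) (v i))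
      (fun (σ : Smp X n) (i : Fin (n + 1)) => X.map (vmap i).op σ)

/-- A *full inclusion*: a fully faithful simplicial map, injective on `0`-simplices. -/
def FullIncl {Y X : SSet} (f : Y ⟶ X) : Prop :=
  FullyFaithfulMap f ∧ Function.Injective (f.app (op (Obj 0)))

/-- A simplicial map is *culf* if its naturality square at every active map is
a pullback of sets. -/
def Culf {K X : SSet} (g : K ⟶ X) : Prop :=
  ∀ (m n : ℕ) (α : Obj m ⟶ Obj n), IsActive α →
    IsPullbackSq (K.map α.op) (g.app (op (Obj n))) (g.app (op (Obj m))) (X.map α.op)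

/-- A simplicial map is *convex* if it is a full inclusion and culf. -/
def Convex {K X : SSet} (g : K ⟶ X) : Prop := FullIncl g ∧ Culf g

/-- `Φ_n`: the set of nondegenerate `n`-simplices. -/
def Phi (X : SSet) (n : ℕ) : Type _ := { σ : Smp X n // Nondeg X n σ }

/-- The structure map of the functional `Φ_n`: the long edge. -/
def phiEdge (X : SSet) (n : ℕ) (a : Phi X n) : Smp X 1 := longEdge X n a.1

/-- Binary convolution of two linear functionals. -/
def Conv2 (X : SSet) {A B : Type*} (pa : A → Smp X 1) (pb : B → Smp X 1) : Type _ :=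
  { t : Smp X 2 × A × B //
    pa t.2.1 = X.map (rho (0 : Fin 2)).op t.1 ∧
    pb t.2.2 = X.map (rho (1 : Fin 2)).op t.1 }

/-- The structure map of a binary convolution. -/
def conv2Edge (X : SSet) {A B : Type*} {pa : A → Smp X 1} {pb : B → Smp X 1}
    (t : Conv2 X pa pb) : Smp X 1 := longEdge X 2 t.1.1

/-- Ternary convolution of three linear functionals. -/
def Conv3 (X : SSet) {A B C : Type*} (pa : A → Smp X 1) (pb : B → Smp X 1)
    (pc : C → Smp X 1) : Type _ :=
  { t : Smp X 3 × A × B × C //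
    pa t.2.1 = X.map (rho (0 : Fin 3)).op t.1 ∧
    pb t.2.2.1 = X.map (rho (1 : Fin 3)).op t.1 ∧
    pc t.2.2.2 = X.map (rho (2 : Fin 3)).op t.1 }

/-- The structure map of a ternary convolution. -/
def conv3Edge (X : SSet) {A B C : Type*} {pa : A → Smp X 1} {pb : B → Smp X 1}
    {pc : C → Smp X 1} (t : Conv3 X pa pb pc) : Smp X 1 := longEdge X 3 t.1.1

/-- `Φ_m^K` as a functional on `X`: nondegenerate `m`-simplices of `K` with
structure map the long edge, viewed in `X₁`. -/
def phiK {K X : SSet} (g : K ⟶ X) (m : ℕ) (a : Phi K m) : Smp X 1 :=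
  g.app (op (Obj 1)) (phiEdge K m a)

/-- `Φ_p^{∉K}`: nondegenerate `p`-simplices of `X` none of whose principal
edges lies in `K`. -/
def PhiNotK {K X : SSet} (g : K ⟶ X) (p : ℕ) : Type _ :=
  { σ : Smp X p // Nondeg X p σ ∧
      ∀ i : Fin p, X.map (rho i).op σ ∉ Set.range (g.app (op (Obj 1))) }

/-- The structure map of `Φ_p^{∉K}`. -/
def notKEdge {K X : SSet} (g : K ⟶ X) (p : ℕ) (a : PhiNotK g p) : Smp X 1 :=
  longEdge X p a.1

/-- `Φ_n^{∩K}`: nondegenerate `n`-simplices of `X` with at least one vertex in `K`. -/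
def PhiCap {K X : SSet} (g : K ⟶ X) (n : ℕ) : Type _ :=
  { σ : Smp X n // Nondeg X n σ ∧
      ∃ i : Fin (n + 1), X.map (vmap i).op σ ∈ Set.range (g.app (op (Obj 0))) }

/-- The structure map of `Φ_n^{∩K}`. -/
def capEdge {K X : SSet} (g : K ⟶ X) (n : ℕ) (a : PhiCap g n) : Smp X 1 :=
  longEdge X n a.1

/-- `Φ_n^{X∖K}`: nondegenerate `n`-simplices of `X` none of whose vertices lies
in `K` (i.e. nondegenerate simplices of the full hull of `X₀ ∖ K₀`). -/
def PhiComp {K X : SSet} (g : K ⟶ X) (n : ℕ) : Type _ :=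
  { σ : Smp X n // Nondeg X n σ ∧
      ∀ i : Fin (n + 1), X.map (vmap i).op σ ∉ Set.range (g.app (op (Obj 0))) }

/-- The structure map of `Φ_n^{X∖K}`. -/
def compEdge {K X : SSet} (g : K ⟶ X) (n : ℕ) (a : PhiComp g n) : Smp X 1 :=
  longEdge X n a.1

/-- `Φ_even`. -/
def PhiEven (X : SSet) : Type _ := Σ n : { n : ℕ // Even n }, Phi X n.1

/-- The structure map of `Φ_even`. -/
def evenEdge (X : SSet) (a : PhiEven X) : Smp X 1 := phiEdge X a.1.1 a.2

/-- `Φ_odd`. -/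
def PhiOdd (X : SSet) : Type _ := Σ n : { n : ℕ // Odd n }, Phi X n.1

/-- The structure map of `Φ_odd`. -/
def oddEdge (X : SSet) (a : PhiOdd X) : Smp X 1 := phiEdge X a.1.1 a.2

/-- `Φ_even^{X∖K}`. -/
def PhiCompEven {K X : SSet} (g : K ⟶ X) : Type _ :=
  Σ n : { n : ℕ // Even n }, PhiComp g n.1

/-- The structure map of `Φ_even^{X∖K}`. -/
def compEvenEdge {K X : SSet} (g : K ⟶ X) (a : PhiCompEven g) : Smp X 1 :=
  compEdge g a.1.1 a.2

/-- `Φ_odd^{X∖K}`. -/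
def PhiCompOdd {K X : SSet} (g : K ⟶ X) : Type _ :=
  Σ n : { n : ℕ // Odd n }, PhiComp g n.1

/-- The structure map of `Φ_odd^{X∖K}`. -/
def compOddEdge {K X : SSet} (g : K ⟶ X) (a : PhiCompOdd g) : Smp X 1 :=
  compEdge g a.1.1 a.2


lemma map_vmap_comp {X : SSet} {n m : ℕ} (j : Fin (n + 1)) (φ : Obj n ⟶ Obj m)
    (σ : Smp X m) :
    X.map (vmap j).op (X.map φ.op σ) = X.map (vmap (φ.toOrderHom j)).op σ := by
  rw [← FunctorToTypes.map_comp_apply, ← op_comp, vmap_comp]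

/-- A full inclusion is injective at every level. -/
lemma fullIncl_inj {Y X : SSet} {f : Y ⟶ X} (hf : FullIncl f) (n : ℕ) :
    Function.Injective (f.app (op (Obj n))) := by
  intro a b hab
  obtain ⟨hc, hu⟩ := hf.1 n
  obtain ⟨u, -, hu2⟩ := hu (fun i => Y.map (vmap i).op a) (f.app (op (Obj n)) a)
    (by funext i; exact FunctorToTypes.naturality f (vmap i).op a)
  have hb : (fun i => Y.map (vmap i).op b) = fun i => Y.map (vmap i).op a := by
    funext i
    apply hf.2
    rw [FunctorToTypes.naturality, FunctorToTypes.naturality, hab]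
  exact ((hu2 a ⟨rfl, rfl⟩).trans (hu2 b ⟨hb, hab.symm⟩).symm)

/-- If all vertices of a simplex lift, the simplex lifts. -/
lemma fullIncl_lift {Y X : SSet} {f : Y ⟶ X} (hf : FullIncl f) {n : ℕ}
    (σ : Smp X n) (w : Fin (n + 1) → Smp Y 0)
    (hw : ∀ i, f.app (op (Obj 0)) (w i) = X.map (vmap i).op σ) :
    ∃ τ : Smp Y n, f.app (op (Obj n)) τ = σ := by
  obtain ⟨τ, hτ, -⟩ := (hf.1 n).2 w σ (funext hw)
  exact ⟨τ, hτ.2⟩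

lemma inert_val {x y : SimplexCategory} {φ : x ⟶ y} (hφ : IsInert φ) :
    ∀ (m : ℕ) (hm : m < x.len + 1),
      (φ.toOrderHom ⟨m, hm⟩ : ℕ) = (φ.toOrderHom 0 : ℕ) + m := by
  intro m
  induction m with
  | zero =>
      intro hm
      show (φ.toOrderHom 0 : ℕ) = (φ.toOrderHom 0 : ℕ) + 0
      omega
  | succ p ih =>
      intro hm
      have hp : p < x.len := by omega
      have h1 : (⟨p + 1, hm⟩ : Fin (x.len + 1)) = (⟨p, hp⟩ : Fin x.len).succ := rfl
      have h2 : (⟨p, hp⟩ : Fin x.len).castSucc = ⟨p, by omega⟩ := rfl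
      rw [h1, hφ ⟨p, hp⟩, h2, ih (by omega)]
      omega

/-- The intervals `[α(i), α(i+1)]` of an active map cover `[n]`. -/
lemma active_cover {k n : ℕ} (hk : 1 ≤ k) (α : Obj k ⟶ Obj n) (hα : IsActive α)
    (m : Fin (n + 1)) :
    ∃ i : Fin k, (α.toOrderHom ⟨i.1, by simp only [SimplexCategory.len_mk]; omega⟩ : ℕ) ≤ m.1 ∧
      m.1 ≤ (α.toOrderHom ⟨i.1 + 1, by simp only [SimplexCategory.len_mk]; omega⟩ : ℕ) := by
  classical
  have hAm : ∀ t : ℕ, min t k < k + 1 := fun t => by omega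
  set A : ℕ → ℕ := fun t => (α.toOrderHom ⟨min t k, hAm t⟩ : ℕ) with hA
  have hA0 : A 0 = 0 := by
    have h0 : (⟨min 0 k, hAm 0⟩ : Fin (k + 1)) = 0 := by
      apply Fin.ext; simp
    rw [hA]; simp only [h0, hα.1]; rfl
  have hAk : A k = n := by
    have h0 : (⟨min k k, hAm k⟩ : Fin (k + 1)) = Fin.last (Obj k).len := by
      apply Fin.ext; simp [Fin.last, SimplexCategory.len_mk]
    show ((α.toOrderHom ⟨min k k, hAm k⟩ : Fin _) : ℕ) = n
    rw [h0, hα.2]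
    simp [Fin.last, SimplexCategory.len_mk]
  set P : ℕ → Prop := fun t => A t ≤ m.1 with hP
  have hP0 : P 0 := by show A 0 ≤ m.1; rw [hA0]; exact Nat.zero_le _
  set i0 := Nat.findGreatest P (k - 1) with hi0
  have hle : i0 ≤ k - 1 := Nat.findGreatest_le _
  have hspec : P i0 := Nat.findGreatest_spec (Nat.zero_le _) hP0
  have hAi0 : A i0 = (α.toOrderHom ⟨i0, by simp only [SimplexCategory.len_mk]; omega⟩ : ℕ) := by
    show (α.toOrderHom ⟨min i0 k, hAm i0⟩ : ℕ) = _
    have he : (⟨min i0 k, hAm i0⟩ : Fin ((Obj k).len + 1)) =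
        ⟨i0, by simp only [SimplexCategory.len_mk]; omega⟩ :=
      Fin.ext (by simp only [Fin.val_mk]; omega)
    rw [he]
  have hAi1 : A (i0 + 1) = (α.toOrderHom ⟨i0 + 1, by simp only [SimplexCategory.len_mk]; omega⟩ : ℕ) := by
    show (α.toOrderHom ⟨min (i0 + 1) k, hAm (i0 + 1)⟩ : ℕ) = _
    have he : (⟨min (i0 + 1) k, hAm (i0 + 1)⟩ : Fin ((Obj k).len + 1)) =
        ⟨i0 + 1, by simp only [SimplexCategory.len_mk]; omega⟩ :=
      Fin.ext (by simp only [Fin.val_mk]; omega)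
    rw [he]
  refine ⟨⟨i0, by omega⟩, by rw [← hAi0]; exact hspec, ?_⟩
  by_cases hcase : i0 + 1 ≤ k - 1
  · have hnP : ¬ P (i0 + 1) :=
      Nat.findGreatest_is_greatest (by omega) hcase
    rw [← hAi1]
    have hnP' : ¬ A (i0 + 1) ≤ m.1 := hnP
    omega
  · have hik : i0 + 1 = k := by omega
    rw [← hAi1, hik, hAk]
    omega

/-- Every full inclusion is inner Kan (relatively Segal), and consequently
semi-ikeo. -/
theorem fullIncl_innerKan_and_semiIkeo {Y X : SSet} (f : Y ⟶ X)
    (hf : FullIncl f) : InnerKan f ∧ SemiIkeo f := by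
  constructor
  · -- InnerKan
    intro n hn
    constructor
    · intro a
      apply Subtype.ext
      funext i
      exact FunctorToTypes.naturality f (rho i).op a
    · intro v σ hyp
      have hcomp : ∀ i : Fin n, f.app (op (Obj 1)) (v.1 i) = X.map (rho i).op σ :=
        fun i => congrFun (congrArg Subtype.val hyp) i
      -- the candidate vertices
      set w : Fin (n + 1) → Smp Y 0 := fun m =>
        if h : m.1 < n then edgeSrc Y (v.1 ⟨m.1, h⟩)
        else edgeTgt Y (v.1 ⟨n - 1, by omega⟩) with hwdef
      have hw : ∀ m, f.app (op (Obj 0)) (w m) = X.map (vmap m).op σ := by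
        intro m
        rw [hwdef]
        by_cases h : m.1 < n
        · simp only [h, dif_pos]
          show f.app (op (Obj 0)) (Y.map (vmap (0 : Fin 2)).op (v.1 ⟨m.1, h⟩)) = _
          have hv : ((rho (⟨m.1, h⟩ : Fin n)).toOrderHom (0 : Fin 2)) = m :=
            Fin.ext (by simp [rho, iota, SimplexCategory.mkHom,
              SimplexCategory.Hom.toOrderHom_mk, OrderHom.coe_mk]; rfl)
          rw [FunctorToTypes.naturality, hcomp, map_vmap_comp, hv]
        · simp only [h, dif_neg, not_false_iff]
          show f.app (op (Obj 0)) (Y.map (vmap (1 : Fin 2)).op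
            (v.1 ⟨n - 1, by omega⟩)) = _
          have hv : ((rho (⟨n - 1, by omega⟩ : Fin n)).toOrderHom (1 : Fin 2)) = m := by
            apply Fin.ext
            have hm : m.1 = n := by omega
            simp [rho, iota, SimplexCategory.mkHom,
              SimplexCategory.Hom.toOrderHom_mk, OrderHom.coe_mk, hm]
            change n - 1 + 1 = _
            omega
          rw [FunctorToTypes.naturality, hcomp, map_vmap_comp, hv]
      obtain ⟨τ, hτ⟩ := fullIncl_lift hf σ w hw
      refine ⟨τ, ⟨?_, hτ⟩, ?_⟩
      · apply Subtype.ext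
        funext i
        apply fullIncl_inj hf 1
        show f.app (op (Obj 1)) (Y.map (rho i).op τ) = f.app (op (Obj 1)) (v.1 i)
        rw [FunctorToTypes.naturality, hτ, hcomp]
      · intro τ' h'
        exact fullIncl_inj hf n (h'.2.trans hτ.symm)
  · -- SemiIkeo
    intro k n hk α hα _ ns γ β hγ hβ hcommγ
    have hγ0 : ∀ i : Fin k,
        ((γ i).toOrderHom 0 : ℕ) = (α.toOrderHom ⟨i.1, by simp only [SimplexCategory.len_mk]; omega⟩ : ℕ) := by
      intro i
      have h := congrFun (congrArg (fun φ => (SimplexCategory.Hom.toOrderHom φ :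
        Fin 2 → Fin (n + 1))) (hcommγ i)) 0
      simp only [SimplexCategory.comp_toOrderHom, OrderHom.comp_coe,
        Function.comp_apply] at h
      rw [(hβ i).1] at h
      have h0 : (rho i).toOrderHom (0 : Fin 2) = (⟨i.1, by omega⟩ : Fin (k + 1)) := by
        apply Fin.ext
        simp [rho, iota]
        rfl
      rw [h0] at h
      exact congrArg Fin.val h.symm
    have hγlast : ∀ i : Fin k,
        ((γ i).toOrderHom (Fin.last (ns i)) : ℕ) =
          (α.toOrderHom ⟨i.1 + 1, by simp only [SimplexCategory.len_mk]; omega⟩ : ℕ) := by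
      intro i
      have h := congrFun (congrArg (fun φ => (SimplexCategory.Hom.toOrderHom φ :
        Fin 2 → Fin (n + 1))) (hcommγ i)) 1
      simp only [SimplexCategory.comp_toOrderHom, OrderHom.comp_coe,
        Function.comp_apply] at h
      have hl : (1 : Fin 2) = Fin.last 1 := rfl
      have hb2 : (β i).toOrderHom (Fin.last 1) = Fin.last (ns i) := (hβ i).2
      rw [hl, hb2] at h
      have h0 : (rho i).toOrderHom (Fin.last 1) = (⟨i.1 + 1, by omega⟩ : Fin (k + 1)) := by
        apply Fin.ext
        simp [rho, iota, Fin.last]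
        rfl
      rw [h0] at h
      exact congrArg Fin.val h.symm
    have hsum : ∀ i : Fin k,
        (α.toOrderHom ⟨i.1 + 1, by simp only [SimplexCategory.len_mk]; omega⟩ : ℕ) =
          (α.toOrderHom ⟨i.1, by simp only [SimplexCategory.len_mk]; omega⟩ : ℕ) + ns i := by
      intro i
      rw [← hγlast i, ← hγ0 i]
      have := inert_val (hγ i) (ns i) (by simp only [SimplexCategory.len_mk]; omega)
      have hL : (Fin.last (ns i)) = (⟨ns i, by omega⟩ : Fin (ns i + 1)) := rfl
      rw [hL]
      exact this
    constructor
    · intro a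
      funext i
      exact FunctorToTypes.naturality f (γ i).op a
    · intro b σ hyp
      have hcomp : ∀ i, f.app (op (Obj (ns i))) (b i) = X.map (γ i).op σ :=
        fun i => congrFun hyp i
      choose I hI1 hI2 using fun m : Fin (n + 1) => active_cover hk α hα m
      have hjlt : ∀ m : Fin (n + 1),
          m.1 - (α.toOrderHom ⟨(I m).1, by simp only [SimplexCategory.len_mk]; omega⟩ : ℕ) < ns (I m) + 1 := by
        intro m
        have h1 := hI1 m
        have h2 := hI2 m
        have h3 := hsum (I m)
        omega
      set jm : ∀ m : Fin (n + 1), Fin (ns (I m) + 1) := fun m =>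
        ⟨m.1 - (α.toOrderHom ⟨(I m).1, by simp only [SimplexCategory.len_mk]; omega⟩ : ℕ), hjlt m⟩ with hjm
      have hγjm : ∀ m, (γ (I m)).toOrderHom (jm m) = m := by
        intro m
        apply Fin.ext
        rw [hjm]
        have h1 := inert_val (hγ (I m))
          (m.1 - (α.toOrderHom ⟨(I m).1, by simp only [SimplexCategory.len_mk]; omega⟩ : ℕ)) (hjlt m)
        rw [h1, hγ0 (I m)]
        have := hI1 m
        omega
      set w : Fin (n + 1) → Smp Y 0 := fun m =>
        Y.map (vmap (jm m)).op (b (I m)) with hwdef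
      have hw : ∀ m, f.app (op (Obj 0)) (w m) = X.map (vmap m).op σ := by
        intro m
        rw [hwdef]
        show f.app (op (Obj 0)) (Y.map (vmap (jm m)).op (b (I m))) = _
        rw [FunctorToTypes.naturality, hcomp, map_vmap_comp, hγjm]
      obtain ⟨τ, hτ⟩ := fullIncl_lift hf σ w hw
      refine ⟨τ, ⟨?_, hτ⟩, ?_⟩
      · funext i
        apply fullIncl_inj hf (ns i)
        show f.app (op (Obj (ns i))) (Y.map (γ i).op τ) =
          f.app (op (Obj (ns i))) (b i)
        rw [FunctorToTypes.naturality, hτ, hcomp]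
      · intro τ' h'
        exact fullIncl_inj hf n (h'.2.trans hτ.symm)

end Crapo
end

section
/- Let K ⊆ X be a convex subspace of a decomposition space X (set-valued). If σ ∈ X_n is an n-simplex whose last vertex belongs to K, then there is a unique index 0 ≤ j ≤ n such that the j-th vertex of σ belongs to K, every vertex of σ with index ≥ j belongs to K and the restricted simplex of σ along the inert map [n−j]↣[n] sending 0 to j belongs to K, and no vertex of σ with index < j belongs to K. -/
open CategoryTheory Opposite

namespace Crapo

/-- The inert inclusion `[2] ↣ [n]` hitting `a ≤ b ≤ last`. -/
def tri {n : ℕ} (a b : Fin (n + 1)) (hab : a ≤ b) : Obj 2 ⟶ Obj n :=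
  SimplexCategory.mkHom
    ⟨fun t => if t.1 = 0 then a else if t.1 = 1 then b else Fin.last n,
     by
      intro p q hpq
      have hpq' : p.1 ≤ q.1 := hpq
      have hb : b ≤ Fin.last n := Fin.le_last b
      have ha : a ≤ Fin.last n := Fin.le_last a
      dsimp only
      split_ifs <;> first | exact le_refl _ | assumption | omega⟩

lemma vertex_of_restrict {X : SSet} {m p : ℕ} (φ : Obj p ⟶ Obj m) (i : Fin (p + 1))
    (σ : Smp X m) :
    X.map (vmap i).op (X.map φ.op σ) = X.map (vmap (φ.toOrderHom i)).op σ := by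
  rw [← FunctorToTypes.map_comp_apply, ← op_comp, vmap_comp]

lemma mem_range_of_vertices {K X : SSet} (g : K ⟶ X) (hff : FullyFaithfulMap g)
    (m : ℕ) (τ : Smp X m)
    (h : ∀ i : Fin (m + 1), X.map (vmap i).op τ ∈ Set.range (g.app (op (Obj 0)))) :
    τ ∈ Set.range (g.app (op (Obj m))) := by
  choose v hv using h
  obtain ⟨a, ⟨_, ha2⟩, _⟩ := (hff m).2 v τ (funext fun i => hv i)
  exact ⟨a, ha2⟩

lemma restrict_mem {K X : SSet} (g : K ⟶ X) {m p : ℕ} {τ : Smp X m}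
    (h : τ ∈ Set.range (g.app (op (Obj m)))) (φ : Obj p ⟶ Obj m) :
    X.map φ.op τ ∈ Set.range (g.app (op (Obj p))) := by
  obtain ⟨a, rfl⟩ := h
  exact ⟨K.map φ.op a, FunctorToTypes.naturality g φ.op a⟩

lemma active_longMap (n : ℕ) : IsActive (longMap n) := by
  constructor
  · exact Fin.ext (by show ((0 : Fin 2) : ℕ) * n = 0; simp)
  · exact Fin.ext (by show ((Fin.last 1 : Fin 2) : ℕ) * n = n; simp)

lemma mem_of_longEdge_mem {K X : SSet} (g : K ⟶ X) (hc : Culf g)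
    (τ : Smp X 2) (h : longEdge X 2 τ ∈ Set.range (g.app (op (Obj 1)))) :
    τ ∈ Set.range (g.app (op (Obj 2))) := by
  obtain ⟨b, hb⟩ := h
  obtain ⟨a, ⟨_, ha2⟩, _⟩ := (hc 1 2 (longMap 2) (active_longMap 2)).2 b τ hb
  exact ⟨a, ha2⟩

/-- If `K ⊆ X` is convex, `X` is a decomposition space, and `σ ∈ X_n` has its
last vertex in `K`, then there is a unique index `j` such that vertex `j` lies
in `K`, all vertices from `j` on lie in `K` and the restriction of `σ` along
the inert map `[n−j] ↣ [n]` sending `0` to `j` lies in `K`, and no vertex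
before `j` lies in `K`. -/
theorem convex_unique_entry_index {K X : SSet} (g : K ⟶ X) (hg : Convex g)
    (hX : DecompositionSpace X) (n : ℕ) (σ : Smp X n)
    (hlast : X.map (vmap (Fin.last n)).op σ ∈ Set.range (g.app (op (Obj 0)))) :
    ∃! j : Fin (n + 1),
      (X.map (vmap j).op σ ∈ Set.range (g.app (op (Obj 0)))) ∧
      (∀ l : Fin (n + 1), j ≤ l →
        X.map (vmap l).op σ ∈ Set.range (g.app (op (Obj 0)))) ∧
      (X.map (iota (n - j.1) (n := n) j.1 (by have := j.2; omega)).op σ ∈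
        Set.range (g.app (op (Obj (n - j.1))))) ∧
      (∀ l : Fin (n + 1), l < j →
        X.map (vmap l).op σ ∉ Set.range (g.app (op (Obj 0)))) := by
  classical
  have hex : ∃ k, ∃ h : k < n + 1,
      X.map (vmap ⟨k, h⟩).op σ ∈ Set.range (g.app (op (Obj 0))) :=
    ⟨n, Nat.lt_succ_self n, hlast⟩
  obtain ⟨hj0lt, hj0mem⟩ := Nat.find_spec hex
  set j0 := Nat.find hex with hj0def
  have hmin : ∀ (l : Fin (n + 1)),
      X.map (vmap l).op σ ∈ Set.range (g.app (op (Obj 0))) → j0 ≤ l.1 :=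
    fun l hm => Nat.find_le ⟨l.2, hm⟩
  have allK : ∀ l : Fin (n + 1), (⟨j0, hj0lt⟩ : Fin (n + 1)) ≤ l →
      X.map (vmap l).op σ ∈ Set.range (g.app (op (Obj 0))) := by
    intro l hl
    set τ : Smp X 2 := X.map (tri ⟨j0, hj0lt⟩ l hl).op σ with hτ
    have he : longEdge X 2 τ ∈ Set.range (g.app (op (Obj 1))) := by
      apply mem_range_of_vertices g hg.1.1
      intro i
      show X.map (vmap i).op (X.map (longMap 2).op τ) ∈ _
      rw [vertex_of_restrict, hτ, vertex_of_restrict]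
      fin_cases i
      · exact hj0mem
      · exact hlast
    have hτK := mem_of_longEdge_mem g hg.2 τ he
    have hv := restrict_mem g hτK (vmap (1 : Fin 3))
    rw [hτ, vertex_of_restrict] at hv
    exact hv
  refine ⟨⟨j0, hj0lt⟩, ⟨hj0mem, allK, ?_, ?_⟩, ?_⟩
  · apply mem_range_of_vertices g hg.1.1
    intro i
    rw [vertex_of_restrict]
    apply allK
    exact Nat.le_add_right j0 i.1
  · intro l hlt hm
    have h1 := hmin l hm
    have h2 : l.1 < j0 := hlt
    omega
  · rintro y ⟨hy1, -, -, hy4⟩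
    have h1 : j0 ≤ y.1 := hmin y hy1
    by_contra hne
    have h2 : j0 < y.1 := lt_of_le_of_ne h1 (fun h => hne (Fin.ext h.symm))
    exact hy4 ⟨j0, hj0lt⟩ h2 hj0mem


end Crapo
end
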